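/- arXiv:1901.11052 — 5 statements merged into one kernel-verified Lean document; each statement's English description precedes it below -/
import Mathlib

section
/- Let N_{r,γ,μ} have the generalized negative binomial distribution with parameters r > 0, γ > 0, μ > 0. Then as μ → 0, the rescaled random variable μ^{1/γ} N_{r,γ,μ} converges in distribution to G^{1/γ}, where G has the gamma distribution with shape r and rate 1. -/
/-!
Conditionally on the mixing variable `Z` with density `g*(·; r, γ, μ)`, `N` is Poisson of mean
`Z`, so with `d = μ^{1/γ}` we get `P(d N ≤ x) = E[P(Poisson(Z) ≤ x / d)]`. Since `Z` has the law
of `T / d` with `T` of density `g*(·; r, γ, 1)`, this equals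
`∫ P(Poisson(t / d) ≤ x / d) g*(t; r, γ, 1) dt`. As `d → 0`, Chernoff bounds show that a Poisson
variable of mean `t / d` lies below `x / d` with probability tending to `1` if `t < x` and to `0`
if `t > x`; dominated convergence then gives the limit `∫_{t ≤ x} g*(t; r, γ, 1) dt`.
-/

open MeasureTheory Real Set Filter Topology

noncomputable section

/-- The generalized gamma density g*(z; r, γ, μ). -/
def ggPdf (r γ μ x : ℝ) : ℝ :=
  if 0 < x then (γ * μ ^ r / Real.Gamma r) * x ^ (γ * r - 1) * Real.exp (-(μ * x ^ γ)) else 0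

/-- The generalized negative binomial probability mass function. -/
def gnbP (r γ μ : ℝ) (k : ℕ) : ℝ :=
  (1 / (k.factorial : ℝ)) * ∫ z in Set.Ioi (0 : ℝ), Real.exp (-z) * z ^ k * ggPdf r γ μ z

/-- The distribution function at `a` of the Poisson law with mean `y`. -/
def poissonCDF (y a : ℝ) : ℝ :=
  ∑' k : ℕ, if (k : ℝ) ≤ a then exp (-y) * y ^ k / k.factorial else 0

lemma tsum_ite_natCast_le_eq_sum {M : Type*} [AddCommMonoid M] [TopologicalSpace M] (f : ℕ → M)
    (a : ℝ) :
    ∑' k : ℕ, (if (k : ℝ) ≤ a then f k else 0) =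
      ∑ k ∈ Finset.range (⌊a⌋₊ + 1) with ((k : ℕ) : ℝ) ≤ a, f k := by
  rw [Finset.sum_filter]
  refine tsum_eq_sum fun k hk => if_neg fun hka => hk ?_
  exact Finset.mem_range.mpr (Nat.lt_succ_of_le (Nat.le_floor hka))

lemma hasSum_exp_neg_mul_pow_div_factorial (y : ℝ) :
    HasSum (fun k : ℕ => exp (-y) * y ^ k / k.factorial) 1 := by
  have h := (NormedSpace.expSeries_div_hasSum_exp y).mul_left (exp (-y))
  rw [← exp_eq_exp_ℝ, ← exp_add, neg_add_cancel, exp_zero] at h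
  simpa only [mul_div_assoc] using h

lemma summable_ite_exp_neg_mul_pow_div_factorial {y : ℝ} (hy : 0 ≤ y) (P : ℕ → Prop)
    [DecidablePred P] :
    Summable fun k : ℕ => if P k then exp (-y) * y ^ k / k.factorial else 0 :=
  (hasSum_exp_neg_mul_pow_div_factorial y).summable.of_nonneg_of_le
    (fun k => by split_ifs <;> positivity) (fun k => by split_ifs <;> first | rfl | positivity)

lemma continuous_poissonCDF (a : ℝ) : Continuous fun y => poissonCDF y a := by
  simp only [poissonCDF, tsum_ite_natCast_le_eq_sum]
  fun_prop

lemma poissonCDF_nonneg {y : ℝ} (hy : 0 ≤ y) (a : ℝ) : 0 ≤ poissonCDF y a :=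
  tsum_nonneg fun k => by split_ifs <;> positivity

lemma poissonCDF_add_tsum_ite_lt {y : ℝ} (hy : 0 ≤ y) (a : ℝ) :
    poissonCDF y a + ∑' k : ℕ, (if a < k then exp (-y) * y ^ k / k.factorial else 0) = 1 := by
  rw [poissonCDF, ← Summable.tsum_add (summable_ite_exp_neg_mul_pow_div_factorial hy _)
    (summable_ite_exp_neg_mul_pow_div_factorial hy _)]
  refine Eq.trans (tsum_congr fun k => ?_) (hasSum_exp_neg_mul_pow_div_factorial y).tsum_eq
  by_cases hk : (k : ℝ) ≤ a
  · simp [hk, not_lt.mpr hk]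
  · simp [hk, lt_of_not_ge hk]

lemma poissonCDF_le_one {y : ℝ} (hy : 0 ≤ y) (a : ℝ) : poissonCDF y a ≤ 1 := by
  rw [← poissonCDF_add_tsum_ite_lt hy a, le_add_iff_nonneg_right]
  exact tsum_nonneg fun k => by split_ifs <;> positivity

/-- Chernoff bound: on `P` the weight `exp (σ * (k - a))` is at least `1`, and the weighted sum
is an exponential series. -/
lemma tsum_ite_poisson_le_exp {y σ a : ℝ} (hy : 0 ≤ y) (P : ℕ → Prop) [DecidablePred P]
    (hP : ∀ k, P k → σ * a ≤ σ * k) :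
    ∑' k : ℕ, (if P k then exp (-y) * y ^ k / k.factorial else 0) ≤
      exp (y * (exp σ - 1) - σ * a) := by
  have hsum := (NormedSpace.expSeries_div_hasSum_exp (y * exp σ)).mul_left (exp (-y - σ * a))
  rw [← exp_eq_exp_ℝ, ← exp_add] at hsum
  have hexp : y * (exp σ - 1) - σ * a = -y - σ * a + y * exp σ := by ring
  rw [hexp]
  refine hasSum_le (fun k => ?_) (summable_ite_exp_neg_mul_pow_div_factorial hy P).hasSum hsum
  split_ifs with hk
  · have hone : 1 ≤ exp (k * σ - σ * a) := one_le_exp (by linarith [hP k hk])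
    calc exp (-y) * y ^ k / k.factorial ≤ exp (-y) * y ^ k / k.factorial * exp (k * σ - σ * a) :=
          le_mul_of_one_le_right (by positivity) hone
      _ = exp (-y - σ * a) * ((y * exp σ) ^ k / k.factorial) := by
          simp only [mul_pow, ← exp_nat_mul, exp_sub]
          ring
  · positivity

/-- `φ σ = t * (exp σ - 1) - σ * x` vanishes at `0` with derivative `t - x ≠ 0` there, so it takes
negative values; `exp σ ≥ 1 + σ` gives `φ σ ≥ (t - x) * σ`, which fixes the sign of `σ`. -/
lemma exists_chernoff_exponent {t x : ℝ} (ht : 0 ≤ t) (htx : t ≠ x) :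
    ∃ σ, (t - x) * σ < 0 ∧ t * (exp σ - 1) - σ * x < 0 := by
  set φ : ℝ → ℝ := fun σ => t * (exp σ - 1) - σ * x
  have hφ : HasDerivAt φ (t - x) 0 := by
    have := (((hasDerivAt_exp 0).sub_const 1).const_mul t).fun_sub
      ((hasDerivAt_id' 0).mul_const x)
    simpa using this
  have hmin : ¬IsLocalMin φ 0 := fun h => sub_ne_zero.mpr htx (h.hasDerivAt_eq_zero hφ)
  obtain ⟨σ, hσ⟩ := (not_eventually.mp hmin).exists
  have hφσ : φ σ < 0 := by simpa [φ] using hσ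
  refine ⟨σ, lt_of_le_of_lt ?_ hφσ, hφσ⟩
  nlinarith [add_one_le_exp σ]

lemma tendsto_exp_mul_chernoff_exponent {ι : Type*} {l : Filter ι} {c : ι → ℝ}
    (hc : Tendsto c l atTop) {t x σ : ℝ} (hσ : t * (exp σ - 1) - σ * x < 0) :
    Tendsto (fun i => exp (c i * t * (exp σ - 1) - σ * (c i * x))) l (𝓝 0) := by
  refine (tendsto_exp_atBot.comp (hc.atTop_mul_const_of_neg hσ)).congr fun i => ?_
  simp only [Function.comp_apply]
  ring_nf

lemma tendsto_poissonCDF_mul_of_lt {ι : Type*} {l : Filter ι} {c : ι → ℝ}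
    (hc : Tendsto c l atTop) {t x : ℝ} (ht : 0 ≤ t) (htx : t < x) :
    Tendsto (fun i => poissonCDF (c i * t) (c i * x)) l (𝓝 1) := by
  obtain ⟨σ, hσ, hφ⟩ := exists_chernoff_exponent ht htx.ne
  have hσ0 : 0 < σ := pos_of_mul_neg_right hσ (by linarith)
  have hlower : ∀ᶠ i in l,
      1 - exp (c i * t * (exp σ - 1) - σ * (c i * x)) ≤ poissonCDF (c i * t) (c i * x) := by
    filter_upwards [hc.eventually_ge_atTop 0] with i hci
    have hy : 0 ≤ c i * t := mul_nonneg hci ht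
    have := tsum_ite_poisson_le_exp hy (fun k => c i * x < k)
      fun k hk => mul_le_mul_of_nonneg_left hk.le hσ0.le
    linarith [poissonCDF_add_tsum_ite_lt hy (c i * x)]
  have hupper : ∀ᶠ i in l, poissonCDF (c i * t) (c i * x) ≤ 1 := by
    filter_upwards [hc.eventually_ge_atTop 0] with i hci
    exact poissonCDF_le_one (mul_nonneg hci ht) _
  have hlim := (tendsto_exp_mul_chernoff_exponent hc hφ).const_sub 1
  rw [sub_zero] at hlim
  exact tendsto_of_tendsto_of_tendsto_of_le_of_le' hlim tendsto_const_nhds hlower hupper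

lemma tendsto_poissonCDF_mul_of_gt {ι : Type*} {l : Filter ι} {c : ι → ℝ}
    (hc : Tendsto c l atTop) {t x : ℝ} (ht : 0 ≤ t) (hxt : x < t) :
    Tendsto (fun i => poissonCDF (c i * t) (c i * x)) l (𝓝 0) := by
  obtain ⟨σ, hσ, hφ⟩ := exists_chernoff_exponent ht hxt.ne'
  have hσ0 : σ < 0 := neg_of_mul_neg_right hσ (by linarith)
  have hlower : ∀ᶠ i in l, 0 ≤ poissonCDF (c i * t) (c i * x) := by
    filter_upwards [hc.eventually_ge_atTop 0] with i hci
    exact poissonCDF_nonneg (mul_nonneg hci ht) _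
  have hupper : ∀ᶠ i in l,
      poissonCDF (c i * t) (c i * x) ≤ exp (c i * t * (exp σ - 1) - σ * (c i * x)) := by
    filter_upwards [hc.eventually_ge_atTop 0] with i hci
    exact tsum_ite_poisson_le_exp (mul_nonneg hci ht) _
      fun k hk => mul_le_mul_of_nonpos_left hk hσ0.le
  exact tendsto_of_tendsto_of_tendsto_of_le_of_le' tendsto_const_nhds
    (tendsto_exp_mul_chernoff_exponent hc hφ) hlower hupper

section GeneralizedGamma

variable {r γ : ℝ}

lemma ggPdf_of_nonpos (μ : ℝ) {t : ℝ} (ht : t ≤ 0) : ggPdf r γ μ t = 0 :=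
  if_neg (not_lt.mpr ht)

lemma measurable_ggPdf (r γ μ : ℝ) : Measurable (ggPdf r γ μ) :=
  Measurable.ite measurableSet_Ioi (by fun_prop) measurable_const

lemma integrable_ggPdf (hr : 0 < r) (hγ : 0 < γ) {μ : ℝ} (hμ : 0 < μ) :
    Integrable (ggPdf r γ μ) := by
  have hsupp : Function.support (ggPdf r γ μ) ⊆ Ioi 0 := fun t ht =>
    not_le.mp fun h => ht (ggPdf_of_nonpos μ h)
  refine (integrableOn_iff_integrable_of_support_subset hsupp).mp ?_
  have hbase := integrableOn_rpow_mul_exp_neg_mul_rpow (s := γ * r - 1) (by nlinarith) hγ hμ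
  refine IntegrableOn.congr_fun (hbase.const_mul (γ * μ ^ r / Gamma r)) (fun t ht => ?_)
    measurableSet_Ioi
  rw [ggPdf, if_pos (show 0 < t from ht), neg_mul, mul_assoc]

lemma mul_ggPdf_mul {s μ : ℝ} (hs : 0 < s) (hμ : 0 ≤ μ) (t : ℝ) :
    s * ggPdf r γ μ (s * t) = ggPdf r γ (μ * s ^ γ) t := by
  rcases le_or_gt t 0 with ht | ht
  · rw [ggPdf_of_nonpos _ ht, ggPdf_of_nonpos _ (mul_nonpos_of_nonneg_of_nonpos hs.le ht),
      mul_zero]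
  rw [ggPdf, ggPdf, if_pos (mul_pos hs ht), if_pos ht, mul_rpow hs.le ht.le,
    mul_rpow hs.le ht.le, mul_rpow hμ (rpow_nonneg hs.le γ), ← rpow_mul hs.le,
    rpow_sub_one hs.ne', mul_assoc μ]
  field_simp

lemma integral_mul_ggPdf_eq (hγ : 0 < γ) {μ : ℝ} (hμ : 0 < μ) (F : ℝ → ℝ) :
    ∫ z, F z * ggPdf r γ μ z = ∫ t, F ((μ ^ (1 / γ))⁻¹ * t) * ggPdf r γ 1 t := by
  set c := (μ ^ (1 / γ))⁻¹
  have hc : 0 < c := inv_pos.mpr (rpow_pos_of_pos hμ _)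
  have hcγ : μ * c ^ γ = 1 := by
    rw [inv_rpow (rpow_nonneg hμ.le _), ← rpow_mul hμ.le, one_div_mul_cancel hγ.ne', rpow_one,
      mul_inv_cancel₀ hμ.ne']
  simp_rw [← hcγ, ← mul_ggPdf_mul hc hμ.le, mul_left_comm _ c, integral_const_mul]
  rw [Measure.integral_comp_mul_left (fun z => F z * ggPdf r γ μ z),
    abs_of_pos (inv_pos.mpr hc), smul_eq_mul, mul_inv_cancel_left₀ hc.ne']

lemma tsum_ite_gnbP_eq_integral (hr : 0 < r) (hγ : 0 < γ) {μ : ℝ} (hμ : 0 < μ) (a : ℝ) :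
    ∑' k : ℕ, (if (k : ℝ) ≤ a then gnbP r γ μ k else 0) =
      ∫ z, poissonCDF z a * ggPdf r γ μ z := by
  have hint : ∀ k : ℕ,
      Integrable fun z => exp (-z) * z ^ k / k.factorial * ggPdf r γ μ z := by
    intro k
    have hmeas : Measurable fun z => exp (-z) * z ^ k / k.factorial * ggPdf r γ μ z :=
      Measurable.mul (by fun_prop) (measurable_ggPdf r γ μ)
    refine (integrable_ggPdf hr hγ hμ).norm.mono' hmeas.aestronglyMeasurable
      (Eventually.of_forall fun z => ?_)
    rcases le_or_gt z 0 with hz | hz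
    · simp [ggPdf_of_nonpos μ hz]
    rw [norm_mul]
    refine mul_le_of_le_one_left (norm_nonneg _) ?_
    rw [norm_of_nonneg (by positivity), mul_div_assoc]
    calc exp (-z) * (z ^ k / k.factorial) ≤ exp (-z) * exp z := by
          gcongr; exact pow_div_factorial_le_exp _ hz.le k
      _ = 1 := by rw [← exp_add, neg_add_cancel, exp_zero]
  simp_rw [poissonCDF, tsum_ite_natCast_le_eq_sum, Finset.sum_mul]
  rw [integral_finsetSum _ fun k _ => hint k]
  refine Finset.sum_congr rfl fun k _ => ?_
  rw [gnbP, ← integral_const_mul, setIntegral_eq_integral_of_forall_compl_eq_zero]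
  · congr 1 with z; ring
  · intro z hz
    rw [ggPdf_of_nonpos μ (not_lt.mp hz), mul_zero, mul_zero]

end GeneralizedGamma

lemma tendsto_integral_poissonCDF_mul {ι : Type*} {l : Filter ι} [l.IsCountablyGenerated]
    {c : ι → ℝ} (hc : Tendsto c l atTop) {g : ℝ → ℝ} (hg : Integrable g)
    (hg0 : ∀ t < 0, g t = 0) (x : ℝ) :
    Tendsto (fun i => ∫ t, poissonCDF (c i * t) (c i * x) * g t) l (𝓝 (∫ t in Iic x, g t)) := by
  rw [← integral_indicator measurableSet_Iic]
  refine tendsto_integral_filter_of_dominated_convergence (fun t => ‖g t‖)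
    (Eventually.of_forall fun i => ?_) ?_ hg.norm ?_
  · have hcont : Continuous fun t => poissonCDF (c i * t) (c i * x) :=
      (continuous_poissonCDF _).comp (continuous_const.mul continuous_id)
    exact hcont.aestronglyMeasurable.mul hg.aestronglyMeasurable
  · filter_upwards [hc.eventually_ge_atTop 0] with i hci
    refine Eventually.of_forall fun t => ?_
    rcases lt_or_ge t 0 with ht | ht
    · simp [hg0 t ht]
    rw [norm_mul]
    refine mul_le_of_le_one_left (norm_nonneg _) ?_
    rw [norm_of_nonneg (poissonCDF_nonneg (mul_nonneg hci ht) _)]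
    exact poissonCDF_le_one (mul_nonneg hci ht) _
  · filter_upwards [compl_mem_ae_iff.mpr (measure_singleton x)] with t htx
    rcases lt_or_ge t 0 with ht | ht
    · simp [hg0 t ht, indicator_apply, tendsto_const_nhds]
    rcases lt_or_gt_of_ne htx with htx | hxt
    · rw [indicator_of_mem (mem_Iic.mpr htx.le)]
      simpa using (tendsto_poissonCDF_mul_of_lt hc ht htx).mul_const (g t)
    · rw [indicator_of_notMem (notMem_Iic.mpr hxt)]
      simpa using (tendsto_poissonCDF_mul_of_gt hc ht hxt).mul_const (g t)

/-- If N_{r,γ,μ} has the GNB distribution with r > 0, γ > 0, μ > 0, then as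
μ → 0 the rescaled variable μ^{1/γ} N_{r,γ,μ} converges in distribution to G^{1/γ} with
G ~ Gamma(r,1); i.e. the distribution functions converge pointwise (the limit distribution
function, which is that of the GG law with parameters (r, γ, 1), is continuous). -/
theorem gnb_rescaled_converges_to_gg (r γ : ℝ) (hr : 0 < r) (hγ : 0 < γ) :
    ∀ x : ℝ, Tendsto
      (fun μ : ℝ => ∑' k : ℕ, if μ ^ (1 / γ) * (k : ℝ) ≤ x then gnbP r γ μ k else 0)
      (nhdsWithin 0 (Set.Ioi 0))
      (nhds (∫ t in Set.Iic x, ggPdf r γ 1 t)) := by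
  intro x
  have hc : Tendsto (fun μ : ℝ => (μ ^ (1 / γ))⁻¹) (𝓝[>] 0) atTop := by
    refine (tendsto_rpow_neg_nhdsGT_zero (neg_neg_of_pos (one_div_pos.mpr hγ))).congr' ?_
    filter_upwards [self_mem_nhdsWithin] with μ hμ
    exact rpow_neg (le_of_lt hμ) _
  refine (tendsto_integral_poissonCDF_mul hc (integrable_ggPdf hr hγ one_pos)
    (fun t ht => ggPdf_of_nonpos 1 ht.le) x).congr' ?_
  filter_upwards [self_mem_nhdsWithin] with μ hμ
  have hscale : ∀ k : ℕ, μ ^ (1 / γ) * k ≤ x ↔ (k : ℝ) ≤ (μ ^ (1 / γ))⁻¹ * x := fun k => by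
    rw [← div_eq_inv_mul, le_div_iff₀' (rpow_pos_of_pos hμ _)]
  simp_rw [hscale, tsum_ite_gnbP_eq_integral hr hγ hμ, integral_mul_ggPdf_eq hγ hμ]

end
end

section
/- Let (P(t))_{t≥0} be a standard Poisson process and (Λ_n) a sequence of positive random variables with Λ_n independent of P for each n. Then n^{−1} P(Λ_n) converges in distribution to a nonnegative random variable Λ as n → ∞ if and only if n^{−1} Λ_n converges in distribution to Λ. -/
open MeasureTheory ProbabilityTheory Real Set Filter Topology

noncomputable section

/-- Convergence in distribution of a sequence of real random variables to a law `μ`,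
expressed via convergence of expectations of bounded continuous test functions. -/
def ConvInDist {Ω : Type*} [MeasurableSpace Ω] (P : Measure Ω)
    (Xn : ℕ → Ω → ℝ) (μ : Measure ℝ) : Prop :=
  ∀ f : BoundedContinuousFunction ℝ ℝ,
    Tendsto (fun n => ∫ ω, f (Xn n ω) ∂P) atTop (nhds (∫ x, f x ∂μ))

/-!
Given `Λ = x`, the variable `N` is Poisson with mean and variance `x`, and the square root
stabilises its variance: since `|√k - √x| ≤ |k - x| / √x`, the mean of `|√N - √x|` is at most `1`
for every `x > 0`. Hence for every bounded `g` with Lipschitz constant `L` the means of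
`g (√(N / n))` and `g (√(Λ / n))` differ by at most `L / √n`, whatever the law of `Λ`. Bounded
Lipschitz functions determine weak convergence, so `√(Nₙ / n)` and `√(Λₙ / n)` have the same limits
in distribution; since `√` is a homeomorphism of `[0, ∞)`, so do `Nₙ / n` and `Λₙ / n`.
-/

open scoped Nat NNReal

def poissonMass (x : ℝ) (k : ℕ) : ℝ := exp (-x) * x ^ k / k !

lemma poissonMass_nonneg {x : ℝ} (hx : 0 ≤ x) (k : ℕ) : 0 ≤ poissonMass x k := by
  unfold poissonMass; positivity

lemma hasSum_poissonMass (x : ℝ) : HasSum (poissonMass x) 1 := by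
  have h := (NormedSpace.expSeries_div_hasSum_exp x).mul_left (exp (-x))
  rw [← Real.exp_eq_exp_ℝ, ← Real.exp_add, neg_add_cancel, Real.exp_zero] at h
  have e : poissonMass x = fun k => exp (-x) * (x ^ k / k !) := by
    funext k; rw [poissonMass, mul_div_assoc]
  rw [e]; exact h

lemma measurable_poissonMass (k : ℕ) : Measurable fun x => poissonMass x k := by
  unfold poissonMass; fun_prop

lemma poissonMass_le_one {x : ℝ} (hx : 0 ≤ x) (k : ℕ) : poissonMass x k ≤ 1 :=
  le_hasSum (hasSum_poissonMass x) k fun j _ => poissonMass_nonneg hx j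

lemma hasSum_descFactorial_mul_poissonMass (x : ℝ) (j : ℕ) :
    HasSum (fun k => (k.descFactorial j : ℝ) * poissonMass x k) (x ^ j) := by
  rw [← hasSum_nat_add_iff' j]
  have hlow : ∑ k ∈ Finset.range j, (k.descFactorial j : ℝ) * poissonMass x k = 0 :=
    Finset.sum_eq_zero fun k hk => by
      rw [Nat.descFactorial_eq_zero_iff_lt.mpr (Finset.mem_range.mp hk)]; simp
  rw [hlow, sub_zero]
  have hterm (m : ℕ) :
      ((m + j).descFactorial j : ℝ) * poissonMass x (m + j) = x ^ j * poissonMass x m := by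
    have hfac : ((m + j)! : ℝ) = m ! * (m + j).descFactorial j := by
      rw [← Nat.factorial_mul_descFactorial (Nat.le_add_left j m), Nat.add_sub_cancel]
      push_cast
      ring
    simp only [poissonMass, hfac]
    field_simp
    ring
  simpa [hterm] using (hasSum_poissonMass x).mul_left (x ^ j)

lemma hasSum_sub_sq_mul_poissonMass (x : ℝ) :
    HasSum (fun k : ℕ => ((k : ℝ) - x) ^ 2 * poissonMass x k) x := by
  have h := ((hasSum_descFactorial_mul_poissonMass x 2).add
    ((hasSum_descFactorial_mul_poissonMass x 1).mul_left (1 - 2 * x))).add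
    ((hasSum_descFactorial_mul_poissonMass x 0).mul_left (x ^ 2))
  convert h using 1
  · funext k
    rw [Nat.cast_descFactorial_two, Nat.descFactorial_one, Nat.descFactorial_zero]
    push_cast
    ring
  · ring

lemma abs_sqrt_sub_sqrt_le {a b : ℝ} (ha : 0 ≤ a) (hb : 0 < b) :
    |√a - √b| ≤ ((a - b) ^ 2 / b + 1) / 2 := by
  have hsb : 0 < √b := sqrt_pos.mpr hb
  have hdiff : |√a - √b| * (√a + √b) = |a - b| := by
    rw [← abs_of_nonneg (by positivity : 0 ≤ √a + √b), ← abs_mul]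
    congr 1
    nlinarith [sq_sqrt ha, sq_sqrt hb.le]
  have hle : |√a - √b| ≤ |a - b| / √b := by
    rw [le_div_iff₀ hsb, ← hdiff]
    gcongr
    linarith [sqrt_nonneg a]
  -- AM-GM: t ≤ (t² + 1) / 2 for t = |a - b| / √b
  have hsq : (|a - b| / √b) ^ 2 = (a - b) ^ 2 / b := by rw [div_pow, sq_abs, sq_sqrt hb.le]
  nlinarith [sq_nonneg (|a - b| / √b - 1)]

lemma abs_tsum_poissonMass_mul_sub_le {x : ℝ} (hx : 0 < x) {g : ℝ → ℝ} {K : ℝ≥0}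
    (hg : LipschitzWith K g) :
    |∑' k : ℕ, poissonMass x k * (g √k - g √x)| ≤ K := by
  have hbound := (((hasSum_sub_sq_mul_poissonMass x).div_const x).add
    (hasSum_poissonMass x)).div_const 2 |>.mul_left (K : ℝ)
  rw [div_self hx.ne', one_add_one_eq_two, div_self two_ne_zero, mul_one] at hbound
  refine tsum_of_norm_bounded (f := fun k : ℕ => poissonMass x k * (g √k - g √x)) hbound
    fun k => ?_
  have hp := poissonMass_nonneg hx.le k
  rw [Real.norm_eq_abs, abs_mul, abs_of_nonneg hp]
  calc poissonMass x k * |g √k - g √x| ≤ poissonMass x k * (K * |√k - √x|) := by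
        gcongr; simpa [Real.dist_eq] using hg.dist_le_mul √k √x
    _ ≤ poissonMass x k * (K * (((k - x) ^ 2 / x + 1) / 2)) := by
        gcongr; exact abs_sqrt_sub_sqrt_le k.cast_nonneg hx
    _ = K * ((((k : ℝ) - x) ^ 2 * poissonMass x k / x + poissonMass x k) / 2) := by ring

lemma hasSum_integral_comp_nat {Ω : Type*} [MeasurableSpace Ω] {P : Measure Ω}
    [IsFiniteMeasure P] {N : Ω → ℕ} (hN : Measurable N) {f : ℕ → ℝ} {C : ℝ}
    (hf : ∀ k, |f k| ≤ C) :
    HasSum (fun k => f k * P.real {ω | N ω = k}) (∫ ω, f (N ω) ∂P) := by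
  have hint : Integrable f (P.map N) :=
    Integrable.of_bound .of_discrete C (ae_of_all _ hf)
  rw [← Measure.sum_smul_dirac (P.map N)] at hint
  have h := hasSum_integral_measure hint
  rw [Measure.sum_smul_dirac, integral_map hN.aemeasurable .of_discrete] at h
  simp only [integral_smul_measure, integral_dirac, smul_eq_mul, mul_comm,
    Measure.map_apply hN (measurableSet_singleton _)] at h
  exact h

section MixedPoisson

variable {Ω : Type*} [MeasurableSpace Ω] {P : Measure Ω} {Λ : Ω → ℝ} {N : Ω → ℕ}

def IsMixedPoisson (P : Measure Ω) (N : Ω → ℕ) (Λ : Ω → ℝ) : Prop :=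
  ∀ k, P {ω | N ω = k} = ∫⁻ ω, ENNReal.ofReal (poissonMass (Λ ω) k) ∂P

lemma IsMixedPoisson.measureReal_eq (h : IsMixedPoisson P N Λ) (hΛ : Measurable Λ)
    (hΛ0 : ∀ ω, 0 ≤ Λ ω) (k : ℕ) :
    P.real {ω | N ω = k} = ∫ ω, poissonMass (Λ ω) k ∂P := by
  rw [measureReal_def, h k, integral_eq_lintegral_of_nonneg_ae
    (ae_of_all _ fun ω => poissonMass_nonneg (hΛ0 ω) k)
    ((measurable_poissonMass k).comp hΛ).aestronglyMeasurable]

lemma hasSum_integral_poissonMass_mul [IsFiniteMeasure P] (hΛ : Measurable Λ) (hΛ0 : ∀ ω, 0 ≤ Λ ω)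
    {F : ℕ → Ω → ℝ} {C : ℝ} (hF : ∀ k, AEStronglyMeasurable (F k) P) (hFC : ∀ k ω, |F k ω| ≤ C) :
    HasSum (fun k => ∫ ω, poissonMass (Λ ω) k * F k ω ∂P)
      (∫ ω, ∑' k, poissonMass (Λ ω) k * F k ω ∂P) := by
  have hbound (ω : Ω) : HasSum (fun k => C * poissonMass (Λ ω) k) C := by
    simpa using (hasSum_poissonMass (Λ ω)).mul_left C
  have hle (k : ℕ) (ω : Ω) : ‖poissonMass (Λ ω) k * F k ω‖ ≤ C * poissonMass (Λ ω) k := by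
    rw [Real.norm_eq_abs, abs_mul, abs_of_nonneg (poissonMass_nonneg (hΛ0 ω) k), mul_comm]
    exact mul_le_mul_of_nonneg_right (hFC k ω) (poissonMass_nonneg (hΛ0 ω) k)
  refine hasSum_integral_of_dominated_convergence (fun k ω => C * poissonMass (Λ ω) k)
    (fun k => ((measurable_poissonMass k).comp hΛ).aestronglyMeasurable.mul (hF k))
    (fun k => ae_of_all _ (hle k)) (ae_of_all _ fun ω => (hbound ω).summable) ?_
    (ae_of_all _ fun ω => (Summable.of_norm_bounded (hbound ω).summable (hle · ω)).hasSum)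
  simp_rw [fun ω => (hbound ω).tsum_eq]
  exact integrable_const C

lemma IsMixedPoisson.integral_sub_integral [IsFiniteMeasure P] (h : IsMixedPoisson P N Λ)
    (hN : Measurable N) (hΛ : Measurable Λ) (hΛ0 : ∀ ω, 0 ≤ Λ ω) {f : ℕ → ℝ} {ψ : ℝ → ℝ} {C : ℝ}
    (hf : ∀ k, |f k| ≤ C) (hψ : Measurable ψ) (hψC : ∀ x, |ψ x| ≤ C) :
    ∫ ω, f (N ω) ∂P - ∫ ω, ψ (Λ ω) ∂P =
      ∫ ω, ∑' k, poissonMass (Λ ω) k * (f k - ψ (Λ ω)) ∂P := by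
  have hψΛ : AEStronglyMeasurable (fun ω => ψ (Λ ω)) P := (hψ.comp hΛ).aestronglyMeasurable
  have hN_law := hasSum_integral_comp_nat (P := P) hN hf
  simp_rw [h.measureReal_eq hΛ hΛ0] at hN_law
  have hΛ_law := hasSum_integral_poissonMass_mul hΛ hΛ0 (fun _ => hψΛ) (fun _ ω => hψC (Λ ω))
  simp_rw [tsum_mul_right, (hasSum_poissonMass _).tsum_eq, one_mul] at hΛ_law
  have hdiff := hasSum_integral_poissonMass_mul hΛ hΛ0 (F := fun k ω => f k - ψ (Λ ω)) (C := C + C)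
    (fun k => aestronglyMeasurable_const.sub hψΛ)
    (fun k ω => (abs_sub _ _).trans (add_le_add (hf k) (hψC (Λ ω))))
  refine (hN_law.sub hΛ_law).unique (hdiff.congr_fun fun k => ?_)
  have hp : Integrable (fun ω => poissonMass (Λ ω) k) P := by
    refine .of_bound ((measurable_poissonMass k).comp hΛ).aestronglyMeasurable 1 (ae_of_all _ ?_)
    intro ω
    rw [Real.norm_eq_abs, abs_of_nonneg (poissonMass_nonneg (hΛ0 ω) k)]
    exact poissonMass_le_one (hΛ0 ω) k
  simp_rw [mul_sub]
  rw [integral_sub (hp.mul_const _) (hp.mul_bdd hψΛ (ae_of_all _ fun ω => hψC (Λ ω))),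
    integral_mul_const, mul_comm]

lemma IsMixedPoisson.abs_integral_sqrt_sub_le [IsProbabilityMeasure P] (h : IsMixedPoisson P N Λ)
    (hN : Measurable N) (hΛ : Measurable Λ) (hΛ0 : ∀ ω, 0 < Λ ω) {g : ℝ → ℝ} {C : ℝ} {K : ℝ≥0}
    (hgC : ∀ y, |g y| ≤ C) (hg : LipschitzWith K g) :
    |∫ ω, g √(N ω) ∂P - ∫ ω, g √(Λ ω) ∂P| ≤ K := by
  rw [h.integral_sub_integral hN hΛ (fun ω => (hΛ0 ω).le) (f := fun k => g √k)
    (ψ := fun x => g √x) (fun k => hgC _)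
    (hg.continuous.measurable.comp continuous_sqrt.measurable) (fun x => hgC _)]
  have hpt (ω : Ω) : ‖∑' k : ℕ, poissonMass (Λ ω) k * (g √k - g √(Λ ω))‖ ≤ K :=
    abs_tsum_poissonMass_mul_sub_le (hΛ0 ω) hg
  simpa using norm_integral_le_of_norm_le_const (μ := P) (ae_of_all _ hpt)

end MixedPoisson

section ConvInDist

variable {Ω : Type*} [MeasurableSpace Ω] {P : Measure Ω} {X Y : ℕ → Ω → ℝ} {μ : Measure ℝ}

lemma ConvInDist.comp_continuous (h : ConvInDist P X μ) {g : ℝ → ℝ} (hg : Continuous g) :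
    ConvInDist P (fun n ω => g (X n ω)) (μ.map g) := fun f => by
  rw [integral_map hg.aemeasurable f.continuous.aestronglyMeasurable]
  exact h (f.compContinuous ⟨g, hg⟩)

lemma convInDist_iff_sqrt (hX : ∀ n ω, 0 ≤ X n ω) (hμ : μ (Iio 0) = 0) :
    ConvInDist P X μ ↔ ConvInDist P (fun n ω => √(X n ω)) (μ.map sqrt) := by
  refine ⟨fun h => h.comp_continuous continuous_sqrt, fun h => ?_⟩
  have hμ_sq : (μ.map sqrt).map (· ^ 2) = μ := by
    have hμ0 : ∀ᵐ x ∂μ, 0 ≤ x := by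
      filter_upwards [measure_eq_zero_iff_ae_notMem.mp hμ] with x hx using not_lt.mp hx
    rw [Measure.map_map (continuous_pow 2).measurable continuous_sqrt.measurable]
    conv_rhs => rw [← Measure.map_id (μ := μ)]
    exact Measure.map_congr (hμ0.mono fun x hx => sq_sqrt hx)
  simpa only [sq_sqrt (hX _ _), hμ_sq] using h.comp_continuous (continuous_pow 2)

lemma convInDist_iff_forall_lipschitz [IsProbabilityMeasure P] [IsProbabilityMeasure μ]
    (hX : ∀ n, Measurable (X n)) :
    ConvInDist P X μ ↔ ∀ g : ℝ → ℝ, (∃ C, ∀ x y, dist (g x) (g y) ≤ C) → (∃ L, LipschitzWith L g) →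
      Tendsto (fun n => ∫ ω, g (X n ω) ∂P) atTop (𝓝 (∫ x, g x ∂μ)) := by
  let law : ℕ → ProbabilityMeasure ℝ := fun n =>
    ⟨P.map (X n), Measure.isProbabilityMeasure_map (hX n).aemeasurable⟩
  have hlaw {g : ℝ → ℝ} (hg : Continuous g) (n : ℕ) :
      ∫ x, g x ∂(law n : Measure ℝ) = ∫ ω, g (X n ω) ∂P :=
    integral_map (hX n).aemeasurable hg.aestronglyMeasurable
  have hconv := ProbabilityMeasure.tendsto_iff_forall_integral_tendsto (F := atTop) (μs := law)
    (μ := ⟨μ, inferInstance⟩)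
  have hlip := tendsto_iff_forall_lipschitz_integral_tendsto (F := atTop) (μs := law)
    (μ := ⟨μ, inferInstance⟩)
  calc ConvInDist P X μ
      ↔ ∀ f : BoundedContinuousFunction ℝ ℝ,
          Tendsto (fun n => ∫ x, f x ∂(law n : Measure ℝ)) atTop (𝓝 (∫ x, f x ∂μ)) :=
        forall_congr' fun f => by simp only [hlaw f.continuous]
    _ ↔ _ := hconv.symm.trans hlip
    _ ↔ _ := forall_congr' fun g => imp_congr_right fun _ => forall_congr' fun ⟨_, hL⟩ => by
        simp only [hlaw hL.continuous]; rfl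

lemma convInDist_congr_of_tendsto_integral_sub [IsProbabilityMeasure P] [IsProbabilityMeasure μ]
    (hX : ∀ n, Measurable (X n)) (hY : ∀ n, Measurable (Y n))
    (hXY : ∀ (g : ℝ → ℝ) (C : ℝ) (L : ℝ≥0), (∀ y, |g y| ≤ C) → LipschitzWith L g →
      Tendsto (fun n => ∫ ω, g (X n ω) ∂P - ∫ ω, g (Y n ω) ∂P) atTop (𝓝 0)) :
    ConvInDist P X μ ↔ ConvInDist P Y μ := by
  rw [convInDist_iff_forall_lipschitz hX, convInDist_iff_forall_lipschitz hY]
  refine forall_congr' fun g => forall_congr' fun ⟨C, hC⟩ => forall_congr' fun ⟨L, hL⟩ => ?_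
  have hgC (y : ℝ) : |g y| ≤ C + |g 0| := by
    simpa [Real.dist_eq] using (abs_sub_abs_le_abs_sub (g y) (g 0)).trans (hC y 0)
  have hsub := hXY g _ L hgC hL
  exact ⟨fun h => by simpa using h.sub hsub, fun h => by simpa using h.add hsub⟩

end ConvInDist

/-- Let (Λ_n) be positive random variables, and for each n let N_n = P(Λ_n)
be the corresponding mixed Poisson random variable (Poisson process with unit intensity
evaluated at the independent random time Λ_n, so that
P(N_n = k) = E[e^{−Λ_n} Λ_n^k / k!]).  Then n⁻¹ N_n converges in distribution to a
nonnegative random variable with law μΛ iff n⁻¹ Λ_n converges in distribution to it. -/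
theorem mixed_poisson_transfer
    {Ω : Type*} [MeasurableSpace Ω] (P : Measure Ω) [IsProbabilityMeasure P]
    (Λn : ℕ → Ω → ℝ) (hΛm : ∀ n, Measurable (Λn n)) (hΛpos : ∀ n ω, 0 < Λn n ω)
    (N : ℕ → Ω → ℕ) (hNm : ∀ n, Measurable (N n))
    (hNlaw : ∀ n k, P {ω | N n ω = k} =
      ∫⁻ ω, ENNReal.ofReal (Real.exp (-(Λn n ω)) * Λn n ω ^ k / k.factorial) ∂P)
    (μΛ : Measure ℝ) [IsProbabilityMeasure μΛ] (hμΛ : μΛ (Set.Iio 0) = 0) :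
    ConvInDist P (fun n ω => (N n ω : ℝ) / n) μΛ ↔
      ConvInDist P (fun n ω => Λn n ω / n) μΛ := by
  rw [convInDist_iff_sqrt (fun n ω => by positivity) hμΛ,
    convInDist_iff_sqrt (fun n ω => div_nonneg (hΛpos n ω).le n.cast_nonneg) hμΛ]
  have : IsProbabilityMeasure (μΛ.map sqrt) :=
    Measure.isProbabilityMeasure_map continuous_sqrt.aemeasurable
  refine convInDist_congr_of_tendsto_integral_sub
    (fun n => (measurable_from_top.comp (hNm n)).div_const _ |>.sqrt)
    (fun n => ((hΛm n).div_const _).sqrt) fun g C L hgC hg => ?_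
  have hbound (n : ℕ) : |∫ ω, g √((N n ω : ℝ) / n) ∂P - ∫ ω, g √(Λn n ω / n) ∂P| ≤ L * (√n)⁻¹ := by
    have h := IsMixedPoisson.abs_integral_sqrt_sub_le (hNlaw n) (hNm n) (hΛm n) (hΛpos n)
      (g := fun y => g ((√n)⁻¹ • y)) (fun y => hgC _) (hg.comp (lipschitzWith_smul _))
    simpa [Real.sqrt_div' _ (n.cast_nonneg : (0 : ℝ) ≤ n), div_eq_inv_mul,
      abs_of_nonneg (Real.sqrt_nonneg (n : ℝ))] using h
  refine squeeze_zero_norm hbound ?_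
  simpa using (tendsto_inv_atTop_zero.comp
    (tendsto_sqrt_atTop.comp tendsto_natCast_atTop_atTop)).const_mul (L : ℝ)

end
end

section
/- Transfer theorem for random sums/maxima: Let (W_n) be random variables, (N_n) natural-valued random variables with N_n independent of (W_n) for each n. Suppose b_n^{−1} W_n ⇒ W for positive constants b_n → ∞, and d_n^{−1} b_{N_n} ⇒ N for positive constants d_n → ∞ and a random variable N. Then d_n^{−1} W_{N_n} ⇒ W · N, where W and N on the right-hand side are independent. -/
/-!
Conditioning on `N n` and using independence, `E f(d_n⁻¹ W_{N_n}) = E[Φ_{N_n}(d_n⁻¹ b_{N_n})]`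
with `Φ_k(c) = E f(c · b_k⁻¹ W_k)`, while the limit law integrates `g(c) = E f(c W)` against the
law of `N`. Tightness of `(b_k⁻¹ W_k)` makes the `Φ_k` equicontinuous, so by Arzelà–Ascoli
`Φ_k → g` uniformly on compact sets; tightness of `(d_n⁻¹ b_{N_n})` keeps the argument in a
compact set up to small probability, and each of the finitely many small indices `k`
contributes nothing in the limit since `d_n⁻¹ W_k → 0`. Hence
`E f(d_n⁻¹ W_{N_n}) - E g(d_n⁻¹ b_{N_n}) → 0`, and `E g(d_n⁻¹ b_{N_n}) → E g(N) = E f(W · N)`.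
-/

open MeasureTheory ProbabilityTheory Real Set Filter Topology

noncomputable section

open scoped BoundedContinuousFunction

section

variable {Ω : Type*} [MeasurableSpace Ω] {P : Measure Ω} (f : ℝ →ᵇ ℝ)

lemma abs_integral_le_add_mul_measureReal [IsProbabilityMeasure P] {h : Ω → ℝ} {S : Set Ω}
    (hS : MeasurableSet S) {ε B : ℝ} (hε : 0 ≤ ε) (hB : ∀ ω, |h ω| ≤ B)
    (hεS : ∀ ω ∉ S, |h ω| ≤ ε) : |∫ ω, h ω ∂P| ≤ ε + B * P.real S := by
  have hbound : Integrable (fun ω => ε + S.indicator (fun _ => B) ω) P :=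
    (integrable_const ε).add ((integrable_const B).indicator hS)
  calc |∫ ω, h ω ∂P| ≤ ∫ ω, |h ω| ∂P := abs_integral_le_integral_abs
    _ ≤ ∫ ω, (ε + S.indicator (fun _ => B) ω) ∂P := by
        refine integral_mono_of_nonneg (ae_of_all _ fun ω => abs_nonneg _) hbound
          (ae_of_all _ fun ω => ?_)
        by_cases hω : ω ∈ S
        · simpa [hω] using (hB ω).trans (le_add_of_nonneg_left hε)
        · simpa [hω] using hεS ω hω
    _ = ε + B * P.real S := by
        rw [integral_add (integrable_const ε) ((integrable_const B).indicator hS),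
          integral_indicator_const B hS]
        simp [mul_comm]

lemma integrable_comp_nat [IsFiniteMeasure P] {N : Ω → ℕ} (hN : Measurable N) {φ : ℕ → ℝ}
    {C : ℝ} (hC : ∀ k, |φ k| ≤ C) : Integrable (fun ω => φ (N ω)) P :=
  .of_bound (measurable_from_nat.comp hN).aestronglyMeasurable C (ae_of_all _ fun ω => hC (N ω))

lemma integrable_comp_const_mul [IsFiniteMeasure P] {X : Ω → ℝ} (hX : Measurable X) (c : ℝ) :
    Integrable (fun ω => f (c * X ω)) P :=
  .of_bound (f.continuous.measurable.comp (hX.const_mul c)).aestronglyMeasurable ‖f‖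
    (ae_of_all _ fun _ => f.norm_coe_le_norm _)

lemma ProbabilityTheory.IndepFun.integral_comp_eq_integral_integral [IsProbabilityMeasure P]
    {β γ : Type*} [MeasurableSpace β] [MeasurableSpace γ] {X : Ω → β} {Y : Ω → γ}
    (hXY : IndepFun X Y P) (hX : Measurable X) (hY : Measurable Y) {F : β → γ → ℝ}
    (hF : Measurable (Function.uncurry F))
    {C : ℝ} (hC : ∀ x y, |F x y| ≤ C) :
    ∫ ω, F (X ω) (Y ω) ∂P = ∫ ω, ∫ ω', F (X ω') (Y ω) ∂P ∂P := by
  have hint : Integrable (Function.uncurry F) ((P.map X).prod (P.map Y)) :=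
    .of_bound hF.aestronglyMeasurable C (ae_of_all _ fun p => hC p.1 p.2)
  calc ∫ ω, F (X ω) (Y ω) ∂P = ∫ p, Function.uncurry F p ∂(P.map fun ω => (X ω, Y ω)) :=
        (integral_map (hX.prodMk hY).aemeasurable hF.aestronglyMeasurable).symm
    _ = ∫ y, ∫ x, F x y ∂(P.map X) ∂(P.map Y) := by
        rw [hXY.map_prod_eq_prod_map_map hX.aemeasurable hY.aemeasurable]
        exact integral_prod_symm _ hint
    _ = ∫ ω, ∫ ω', F (X ω') (Y ω) ∂P ∂P := by
        rw [integral_map hY.aemeasurable (f := fun y => ∫ x, F x y ∂P.map X)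
          (hF.stronglyMeasurable.integral_prod_left' (μ := P.map X)).aestronglyMeasurable]
        congr 1 with ω
        exact integral_map hX.aemeasurable
          (hF.comp (measurable_id.prodMk measurable_const)).aestronglyMeasurable

lemma ConvInDist.isTightMeasureSet [IsProbabilityMeasure P] {X : ℕ → Ω → ℝ}
    {μ : Measure ℝ} [IsProbabilityMeasure μ] (hX : ∀ n, Measurable (X n))
    (h : ConvInDist P X μ) : IsTightMeasureSet (range fun n => P.map (X n)) := by
  let ν : ℕ → ProbabilityMeasure ℝ := fun n =>
    ⟨P.map (X n), Measure.isProbabilityMeasure_map (hX n).aemeasurable⟩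
  have hν : Tendsto ν atTop (𝓝 ⟨μ, inferInstance⟩) :=
    ProbabilityMeasure.tendsto_iff_forall_integral_tendsto.2 fun f => by
      simpa [ν, integral_map (hX _).aemeasurable f.continuous.aestronglyMeasurable] using h f
  have hcpt := hν.isCompact_insert_range
  refine (isTightMeasureSet_of_isCompact_closure (hcpt.isClosed.closure_eq ▸ hcpt)).subset ?_
  rintro _ ⟨n, rfl⟩
  exact ⟨ν n, mem_insert_of_mem _ (mem_range_self n), rfl⟩

lemma MeasureTheory.IsTightMeasureSet.exists_measureReal_lt_abs_le [IsFiniteMeasure P]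
    {ι : Type*} {X : ι → Ω → ℝ} (h : IsTightMeasureSet (range fun i => P.map (X i)))
    (hX : ∀ i, Measurable (X i)) {ε : ℝ} (hε : 0 < ε) :
    ∃ R, ∀ i, P.real {ω | R < |X i ω|} ≤ ε := by
  obtain ⟨R, hR⟩ := ((tendsto_measure_norm_gt_of_isTightMeasureSet h).eventually_lt_const
    (ENNReal.ofReal_pos.2 hε)).exists
  refine ⟨R, fun i => ENNReal.toReal_le_of_le_ofReal hε.le (le_trans ?_ hR.le)⟩
  have hmeas : MeasurableSet {x : ℝ | R < ‖x‖} := measurableSet_lt measurable_const measurable_norm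
  calc P {ω | R < |X i ω|} = P.map (X i) {x | R < ‖x‖} := by
        rw [Measure.map_apply (hX i) hmeas]; rfl
    _ ≤ ⨆ μ ∈ range fun i => P.map (X i), μ {x | R < ‖x‖} :=
        le_biSup (fun μ : Measure ℝ => μ {x | R < ‖x‖}) (mem_range_self i)

lemma tendsto_integral_comp_of_isTightMeasureSet [IsProbabilityMeasure P] {N : ℕ → Ω → ℕ}
    (hN : ∀ n, Measurable (N n)) {c : ℕ → ℕ → ℝ}
    (htight : IsTightMeasureSet (range fun n => P.map fun ω => c n (N n ω)))
    {D : ℕ → ℕ → ℝ} {B : ℝ} (hB : ∀ n k, |D n k| ≤ B)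
    (hfix : ∀ k, Tendsto (fun n => D n k) atTop (𝓝 0))
    (hunif : ∀ M, ∀ ε > 0, ∀ᶠ k in atTop, ∀ n, |c n k| ≤ M → |D n k| ≤ ε) :
    Tendsto (fun n => ∫ ω, D n (N n ω) ∂P) atTop (𝓝 0) := by
  have hcN : ∀ n, Measurable fun ω => c n (N n ω) := fun n => measurable_from_nat.comp (hN n)
  rw [Metric.tendsto_nhds]
  intro ε hε
  have hB0 : 0 ≤ B := (abs_nonneg _).trans (hB 0 0)
  set η := ε / (2 * (B + 1))
  have hη : 0 < η := by positivity
  obtain ⟨M, hM⟩ := htight.exists_measureReal_lt_abs_le hcN hη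
  obtain ⟨K, hK⟩ := eventually_atTop.1 (hunif M η hη)
  have hsmall : ∀ᶠ n in atTop, ∀ k ∈ Iio K, |D n k| ≤ η :=
    (eventually_all_finite (finite_Iio K)).2 fun k _ =>
      (Metric.tendsto_nhds.1 (hfix k) η hη).mono fun n hn => by
        simpa [Real.dist_eq] using hn.le
  filter_upwards [hsmall] with n hn
  have hgood : ∀ ω, ω ∉ {ω | M < |c n (N n ω)|} → |D n (N n ω)| ≤ η := fun ω hω => by
    replace hω : |c n (N n ω)| ≤ M := not_lt.1 hω
    rcases lt_or_ge (N n ω) K with hlt | hge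
    · exact hn _ hlt
    · exact hK _ hge n hω
  rw [Real.dist_eq, sub_zero]
  calc _ ≤ η + B * P.real {ω | M < |c n (N n ω)|} :=
        abs_integral_le_add_mul_measureReal (measurableSet_lt measurable_const (hcN n).abs)
          hη.le (fun ω => hB _ _) hgood
    _ ≤ η + B * η := by gcongr; exact hM n
    _ < ε := by
        have : η * (2 * (B + 1)) = ε := div_mul_cancel₀ _ (by positivity)
        nlinarith

lemma tendsto_integral_comp_sub_of_isTightMeasureSet [IsProbabilityMeasure P]
    {N : ℕ → Ω → ℕ} (hN : ∀ n, Measurable (N n)) {c : ℕ → ℕ → ℝ}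
    (htight : IsTightMeasureSet (range fun n => P.map fun ω => c n (N n ω)))
    {φ ψ : ℕ → ℕ → ℝ} {B : ℝ} (hφ : ∀ n k, |φ n k| ≤ B) (hψ : ∀ n k, |ψ n k| ≤ B)
    (hfix : ∀ k, Tendsto (fun n => φ n k - ψ n k) atTop (𝓝 0))
    (hunif : ∀ M, ∀ ε > 0, ∀ᶠ k in atTop, ∀ n, |c n k| ≤ M → |φ n k - ψ n k| ≤ ε) :
    Tendsto (fun n => ∫ ω, φ n (N n ω) ∂P - ∫ ω, ψ n (N n ω) ∂P) atTop (𝓝 0) := by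
  refine (tendsto_integral_comp_of_isTightMeasureSet hN htight (B := 2 * B)
    (fun n k => (abs_sub _ _).trans (by linarith [hφ n k, hψ n k])) hfix hunif).congr fun n => ?_
  exact integral_sub (integrable_comp_nat (hN n) (hφ n)) (integrable_comp_nat (hN n) (hψ n))

def scaledExpectation (P : Measure Ω) (f : ℝ →ᵇ ℝ) (X : Ω → ℝ) (c : ℝ) : ℝ :=
  ∫ ω, f (c * X ω) ∂P

lemma abs_scaledExpectation_le [IsProbabilityMeasure P] (X : Ω → ℝ) (c : ℝ) :
    |scaledExpectation P f X c| ≤ ‖f‖ := by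
  simpa [scaledExpectation] using
    norm_integral_le_of_norm_le_const (μ := P) (ae_of_all _ fun ω => f.norm_coe_le_norm (c * X ω))

lemma scaledExpectation_zero [IsProbabilityMeasure P] (X : Ω → ℝ) :
    scaledExpectation P f X 0 = f 0 := by
  simp [scaledExpectation]

lemma scaledExpectation_rescale (X : Ω → ℝ) {b : ℝ} (hb : b ≠ 0) (a : ℝ) :
    scaledExpectation P f (fun ω => b⁻¹ * X ω) (a * b) = scaledExpectation P f X a := by
  simp only [scaledExpectation, mul_assoc, mul_inv_cancel_left₀ hb]

lemma continuous_scaledExpectation [IsFiniteMeasure P] {X : Ω → ℝ} (hX : Measurable X) :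
    Continuous (scaledExpectation P f X) :=
  continuous_of_dominated
    (fun c => (f.continuous.measurable.comp (hX.const_mul c)).aestronglyMeasurable)
    (fun _ => ae_of_all _ fun _ => f.norm_coe_le_norm _) (integrable_const ‖f‖)
    (ae_of_all _ fun ω => f.continuous.comp (continuous_mul_const (X ω)))

lemma tendsto_scaledExpectation_of_tendsto_zero [IsProbabilityMeasure P] {X : Ω → ℝ}
    (hX : Measurable X) {ι : Type*} {l : Filter ι} {a : ι → ℝ} (ha : Tendsto a l (𝓝 0)) :
    Tendsto (fun i => scaledExpectation P f X (a i)) l (𝓝 (f 0)) := by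
  rw [← scaledExpectation_zero (P := P) f X]
  exact ((continuous_scaledExpectation f hX).tendsto 0).comp ha

lemma integral_comp_randomIndex [IsProbabilityMeasure P] {W : ℕ → Ω → ℝ} {N : Ω → ℕ}
    (hW : ∀ k, Measurable (W k)) (hN : Measurable N) (hInd : IndepFun (fun ω k => W k ω) N P)
    (a : ℝ) : ∫ ω, f (a * W (N ω) ω) ∂P = ∫ ω, scaledExpectation P f (W (N ω)) a ∂P := by
  have hF : Measurable (Function.uncurry fun (w : ℕ → ℝ) k => f (a * w k)) :=
    measurable_from_prod_countable_left fun k => by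
      dsimp only [Function.uncurry]
      fun_prop
  exact hInd.integral_comp_eq_integral_integral (measurable_pi_lambda _ hW) hN hF
    fun w k => (Real.norm_eq_abs _).symm.trans_le (f.norm_coe_le_norm _)

lemma equicontinuous_scaledExpectation [IsProbabilityMeasure P] {ι : Type*}
    {X : ι → Ω → ℝ} (hX : ∀ i, Measurable (X i))
    (htight : IsTightMeasureSet (range fun i => P.map (X i))) :
    Equicontinuous fun i => scaledExpectation P f (X i) := by
  intro c₀
  rw [Metric.equicontinuousAt_iff_right]
  intro ε hε
  set η := ε / (2 * (2 * ‖f‖ + 1))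
  have hη : 0 < η := by positivity
  obtain ⟨R, hR⟩ := htight.exists_measureReal_lt_abs_le hX hη
  set A := (|c₀| + 1) * |R|
  obtain ⟨δ, hδ, hfδ⟩ := Metric.uniformContinuousOn_iff.1
    ((isCompact_Icc (a := -A) (b := A)).uniformContinuousOn_of_continuous
      f.continuous.continuousOn) η hη
  have hρ : 0 < min 1 (δ / (|R| + 1)) := by positivity
  filter_upwards [Metric.ball_mem_nhds c₀ hρ] with c hc i
  rw [Metric.mem_ball, Real.dist_eq, lt_min_iff] at hc
  have hclose : ∀ ω, ¬ R < |X i ω| → |f (c₀ * X i ω) - f (c * X i ω)| ≤ η := by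
    intro ω hω
    have hXR : |X i ω| ≤ |R| := (not_lt.1 hω).trans (le_abs_self R)
    have hmem : ∀ a, |a| ≤ |c₀| + 1 → a * X i ω ∈ Icc (-A) A := fun a ha => by
      rw [mem_Icc, ← abs_le, abs_mul]
      exact mul_le_mul ha hXR (abs_nonneg _) (by positivity)
    have hdist : dist (c₀ * X i ω) (c * X i ω) < δ := by
      rw [Real.dist_eq, ← sub_mul, abs_mul, abs_sub_comm]
      calc |c - c₀| * |X i ω| ≤ δ / (|R| + 1) * |R| := by gcongr; exact hc.2.le
        _ < δ := by rw [div_mul_eq_mul_div, div_lt_iff₀ (by positivity)]; nlinarith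
    have h₁ : |c| ≤ |c₀| + 1 := by linarith [abs_sub_abs_le_abs_sub c c₀]
    exact (hfδ _ (hmem c₀ (by linarith)) _ (hmem c h₁) hdist).le
  have hbound : ∀ ω, |f (c₀ * X i ω) - f (c * X i ω)| ≤ 2 * ‖f‖ := fun ω => by
    simpa [Real.dist_eq] using f.dist_le_two_norm (c₀ * X i ω) (c * X i ω)
  rw [Real.dist_eq, scaledExpectation, scaledExpectation, ← integral_sub
    (integrable_comp_const_mul f (hX i) c₀) (integrable_comp_const_mul f (hX i) c)]
  calc _ ≤ η + 2 * ‖f‖ * P.real {ω | R < |X i ω|} :=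
        abs_integral_le_add_mul_measureReal (measurableSet_lt measurable_const (hX i).abs)
          hη.le hbound hclose
    _ ≤ η + 2 * ‖f‖ * η := by gcongr; exact hR i
    _ < ε := by
        have : η * (2 * (2 * ‖f‖ + 1)) = ε := div_mul_cancel₀ _ (by positivity)
        nlinarith

lemma ConvInDist.tendstoUniformlyOn_scaledExpectation [IsProbabilityMeasure P]
    {X : ℕ → Ω → ℝ} {μ : Measure ℝ} [IsProbabilityMeasure μ] (hX : ∀ n, Measurable (X n))
    (h : ConvInDist P X μ) {K : Set ℝ} (hK : IsCompact K) :
    TendstoUniformlyOn (fun n => scaledExpectation P f (X n)) (scaledExpectation μ f id)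
      atTop K := by
  have hequi := equicontinuous_scaledExpectation f hX (h.isTightMeasureSet hX)
  have hpointwise : Tendsto (fun n => scaledExpectation P f (X n)) atTop
      (𝓝 (scaledExpectation μ f id)) :=
    tendsto_pi_nhds.2 fun c => h (f.compContinuous ⟨(c * ·), continuous_const_mul c⟩)
  have := (EquicontinuousOn.tendsto_uniformOnFun_iff_pi (𝔖 := {K | IsCompact K})
    (fun _ hK => hK) (sUnion_eq_univ_iff.2 fun c => ⟨{c}, isCompact_singleton, rfl⟩)
    (fun _ _ => hequi.equicontinuousOn _) atTop _).2 hpointwise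
  exact UniformOnFun.tendsto_iff_tendstoUniformlyOn.1 this K hK

end

def scaledExpectationBCF (μ : Measure ℝ) [IsProbabilityMeasure μ] (f : ℝ →ᵇ ℝ) : ℝ →ᵇ ℝ :=
  .ofNormedAddCommGroup (scaledExpectation μ f id) (continuous_scaledExpectation f measurable_id)
    ‖f‖ fun c => (Real.norm_eq_abs _).trans_le (abs_scaledExpectation_le f id c)

@[simp]
lemma scaledExpectationBCF_apply (μ : Measure ℝ) [IsProbabilityMeasure μ] (f : ℝ →ᵇ ℝ) (c : ℝ) :
    scaledExpectationBCF μ f c = scaledExpectation μ f id c := rfl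

lemma integral_map_mul_prod (μ ν : Measure ℝ) [IsFiniteMeasure μ] [IsFiniteMeasure ν]
    (f : ℝ →ᵇ ℝ) :
    ∫ x, f x ∂((μ.prod ν).map fun p : ℝ × ℝ => p.1 * p.2) = ∫ y, scaledExpectation μ f id y ∂ν := by
  have hmul : Measurable fun p : ℝ × ℝ => p.1 * p.2 := measurable_fst.mul measurable_snd
  rw [integral_map hmul.aemeasurable f.continuous.aestronglyMeasurable, integral_prod_symm]
  · simp only [scaledExpectation, id, mul_comm]
  · exact .of_bound (f.continuous.measurable.comp hmul).aestronglyMeasurable ‖f‖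
      (ae_of_all _ fun _ => f.norm_coe_le_norm _)

theorem transfer_theorem_general
    {Ω : Type*} [MeasurableSpace Ω] (P : Measure Ω) [IsProbabilityMeasure P]
    (W : ℕ → Ω → ℝ) (N : ℕ → Ω → ℕ)
    (hWm : ∀ n, Measurable (W n)) (hNm : ∀ n, Measurable (N n))
    (hInd : ∀ n, IndepFun (fun ω k => W k ω) (N n) P)
    (b d : ℕ → ℝ)
    (hbtop : Tendsto b atTop atTop) (hdtop : Tendsto d atTop atTop)
    (μW μN : Measure ℝ) [IsProbabilityMeasure μW] [IsProbabilityMeasure μN]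
    (hWconv : ConvInDist P (fun n ω => (b n)⁻¹ * W n ω) μW)
    (hNconv : ConvInDist P (fun n ω => (d n)⁻¹ * b (N n ω)) μN) :
    ConvInDist P (fun n ω => (d n)⁻¹ * W (N n ω) ω)
      (Measure.map (fun p : ℝ × ℝ => p.1 * p.2) (μW.prod μN)) := by
  intro f
  set G := scaledExpectationBCF μW f
  have hfix : ∀ k, Tendsto (fun n => scaledExpectation P f (W k) (d n)⁻¹ - G ((d n)⁻¹ * b k))
      atTop (𝓝 0) := fun k => by
    have hinv : Tendsto (fun n => (d n)⁻¹) atTop (𝓝 0) := tendsto_inv_atTop_zero.comp hdtop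
    simpa [G] using (tendsto_scaledExpectation_of_tendsto_zero f (hWm k) hinv).sub
      (tendsto_scaledExpectation_of_tendsto_zero f measurable_id
        (by simpa using hinv.mul_const (b k)))
  have hunif : ∀ M, ∀ ε > 0, ∀ᶠ k in atTop, ∀ n, |(d n)⁻¹ * b k| ≤ M →
      |scaledExpectation P f (W k) (d n)⁻¹ - G ((d n)⁻¹ * b k)| ≤ ε := by
    intro M ε hε
    filter_upwards [Metric.tendstoUniformlyOn_iff.1 (hWconv.tendstoUniformlyOn_scaledExpectation
      f (fun k => (hWm k).const_mul _) (isCompact_Icc (a := -M) (b := M))) ε hε,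
      hbtop.eventually_gt_atTop 0] with k hk hbk n hn
    have := hk _ (abs_le.1 hn)
    rw [scaledExpectation_rescale f (W k) hbk.ne', Real.dist_eq, abs_sub_comm] at this
    exact this.le
  have key := tendsto_integral_comp_sub_of_isTightMeasureSet hNm
    (hNconv.isTightMeasureSet fun n => measurable_from_nat.comp (hNm n))
    (fun n k => abs_scaledExpectation_le f (W k) _) (fun n k => abs_scaledExpectation_le f id _)
    hfix hunif
  simp only [← integral_comp_randomIndex f hWm (hNm _) (hInd _)] at key
  rw [integral_map_mul_prod]
  simpa [G] using key.add (hNconv G)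

/-- Transfer theorem: Let (W_n) be random variables and (N_n) natural-valued
random variables, N_n independent of the whole sequence (W_k).  If b_n⁻¹ W_n ⇒ W for
positive constants b_n → ∞, and d_n⁻¹ b_{N_n} ⇒ N for positive constants d_n → ∞, then
d_n⁻¹ W_{N_n} ⇒ W · N, with W and N independent on the right-hand side (so the limit law is
the pushforward of the product of the two limit laws under multiplication). -/
theorem transfer_theorem
    {Ω : Type*} [MeasurableSpace Ω] (P : Measure Ω) [IsProbabilityMeasure P]
    (W : ℕ → Ω → ℝ) (N : ℕ → Ω → ℕ)
    (hWm : ∀ n, Measurable (W n)) (hNm : ∀ n, Measurable (N n))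
    (hInd : ∀ n, IndepFun (fun ω k => W k ω) (N n) P)
    (b d : ℕ → ℝ) (hb : ∀ n, 0 < b n) (hd : ∀ n, 0 < d n)
    (hbtop : Tendsto b atTop atTop) (hdtop : Tendsto d atTop atTop)
    (μW μN : Measure ℝ) [IsProbabilityMeasure μW] [IsProbabilityMeasure μN]
    (hWconv : ConvInDist P (fun n ω => (b n)⁻¹ * W n ω) μW)
    (hNconv : ConvInDist P (fun n ω => (d n)⁻¹ * b (N n ω)) μN) :
    ConvInDist P (fun n ω => (d n)⁻¹ * W (N n ω) ω)
      (Measure.map (fun p : ℝ × ℝ => p.1 * p.2) (μW.prod μN)) :=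
  transfer_theorem_general P W N hWm hNm hInd b d hbtop hdtop μW μN hWconv hNconv

end
end

section
/- Let G₁ ~ Gamma(r, 1) and G₂ ~ Gamma(1−r, 1) be independent, 0 < r < 1, and let W ~ Exponential(1) be independent of them. Define Z = (G₁ + G₂)/G₁. Then W/Z has the same distribution as a Gamma(r, 1) random variable. -/
/-!
Conditionally on `Z = (G₁ + G₂) / G₁`, the variable `W / Z` is exponential with rate `Z`, so
`P(W / Z > t) = E[exp(-t Z)]`. Integrating out `G₂ ~ Gamma(1 - r, 1)` by its Laplace transform gives
`E[exp(-t (x + G₂) / x)] = exp(-t) (x / (x + t)) ^ (1 - r)`, and multiplying by the `Gamma(r, 1)`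
density at `x` yields exactly that density at `x + t`. Integrating over `x > 0` gives `P(G₁ > t)`.
-/

open MeasureTheory ProbabilityTheory Real Set

noncomputable section

/-- The gamma density with shape r and rate μ. -/
def gammaPdf (r μ x : ℝ) : ℝ :=
  if 0 < x then (μ ^ r / Real.Gamma r) * x ^ (r - 1) * Real.exp (-(μ * x)) else 0

/-- The gamma distribution with shape r and rate μ, as a measure on ℝ. -/
def gammaLaw (r μ : ℝ) : Measure ℝ :=
  (volume : Measure ℝ).withDensity fun x => ENNReal.ofReal (gammaPdf r μ x)

lemma measurable_gammaPDF (a r : ℝ) : Measurable (gammaPDF a r) :=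
  (measurable_gammaPDFReal a r).ennreal_ofReal

lemma gammaLaw_eq_gammaMeasure (a μ : ℝ) : gammaLaw a μ = gammaMeasure a μ := by
  refine withDensity_congr_ae ?_
  filter_upwards [compl_mem_ae_iff.mpr (measure_singleton (0 : ℝ))] with x hx
  rcases lt_or_gt_of_ne (mem_compl_singleton_iff.mp hx) with h | h
  · simp [gammaPdf, gammaPDF, gammaPDFReal, h.not_gt, h.not_ge]
  · simp [gammaPdf, gammaPDF, gammaPDFReal, h, h.le]

lemma ae_pos_gammaMeasure (a r : ℝ) : ∀ᵐ x ∂gammaMeasure a r, 0 < x := by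
  have hnonneg : ∀ᵐ x ∂gammaMeasure a r, 0 ≤ x := by
    simp only [ae_iff, not_le]
    change gammaMeasure a r (Iio 0) = 0
    rw [gammaMeasure, withDensity_apply _ measurableSet_Iio]
    exact lintegral_gammaPDF_of_nonpos le_rfl
  have hne : ∀ᵐ x ∂gammaMeasure a r, x ≠ 0 :=
    (withDensity_absolutelyContinuous _ _).ae_le
      (compl_mem_ae_iff.mpr (measure_singleton (0 : ℝ)))
  filter_upwards [hnonneg, hne] with x h0 h1 using lt_of_le_of_ne h0 h1.symm

lemma expMeasure_Ioi {r t : ℝ} (hr : 0 < r) (ht : 0 ≤ t) :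
    expMeasure r (Ioi t) = ENNReal.ofReal (exp (-(r * t))) := by
  have := isProbabilityMeasure_expMeasure hr
  have hle : exp (-(r * t)) ≤ 1 := exp_le_one_iff.mpr (by nlinarith)
  rw [← compl_Iic, prob_compl_eq_one_sub measurableSet_Iic, ← ofReal_cdf, cdf_expMeasure_eq hr,
    if_pos ht, ← ENNReal.ofReal_one, ← ENNReal.ofReal_sub _ (sub_nonneg.mpr hle), sub_sub_cancel]

lemma gammaPDF_mul_exp_neg_mul {a r s : ℝ} (hr : 0 < r) (hrs : 0 < r + s) (x : ℝ) :
    gammaPDF a r x * ENNReal.ofReal (exp (-(s * x)))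
      = ENNReal.ofReal ((r / (r + s)) ^ a) * gammaPDF a (r + s) x := by
  rcases lt_or_ge x 0 with hx | hx
  · simp [gammaPDF_of_neg hx]
  rw [gammaPDF_of_nonneg hx, gammaPDF_of_nonneg hx, ← ENNReal.ofReal_mul' (exp_pos _).le,
    ← ENNReal.ofReal_mul (rpow_pos_of_pos (div_pos hr hrs) a).le]
  congr 1
  rw [div_rpow hr.le hrs.le, show -((r + s) * x) = -(r * x) + -(s * x) by ring, exp_add]
  field_simp [(rpow_pos_of_pos hrs a).ne']

lemma lintegral_exp_neg_mul_gammaMeasure {a r s : ℝ} (ha : 0 < a) (hr : 0 < r)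
    (hrs : 0 < r + s) :
    ∫⁻ x, ENNReal.ofReal (exp (-(s * x))) ∂gammaMeasure a r
      = ENNReal.ofReal ((r / (r + s)) ^ a) := by
  rw [gammaMeasure,
    lintegral_withDensity_eq_lintegral_mul _ (measurable_gammaPDF a r) (by fun_prop)]
  simp_rw [Pi.mul_apply, gammaPDF_mul_exp_neg_mul hr hrs]
  rw [lintegral_const_mul _ (measurable_gammaPDF a (r + s)),
    lintegral_gammaPDF_eq_one ha hrs, mul_one]

lemma gammaPDF_mul_exp_mul_rpow_div_add {a r t x : ℝ} (ht : 0 ≤ t) (hx : 0 < x) :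
    gammaPDF a r x * ENNReal.ofReal (exp (-(r * t)) * (x / (x + t)) ^ (1 - a))
      = gammaPDF a r (x + t) := by
  have hxt : 0 < x + t := by linarith
  rw [gammaPDF_of_nonneg hx.le, gammaPDF_of_nonneg hxt.le,
    ← ENNReal.ofReal_mul' (by positivity)]
  congr 1
  rw [div_rpow hx.le hxt.le, show 1 - a = -(a - 1) by ring, rpow_neg hx.le, rpow_neg hxt.le,
    mul_add, neg_add, exp_add]
  field_simp [(rpow_pos_of_pos hx (a - 1)).ne']

lemma lintegral_exp_mul_rpow_div_add_gammaMeasure {a r t : ℝ} (ht : 0 ≤ t) :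
    ∫⁻ x, ENNReal.ofReal (exp (-(r * t)) * (x / (x + t)) ^ (1 - a)) ∂gammaMeasure a r
      = gammaMeasure a r (Ioi t) := by
  have hshift : MeasurePreserving (· + t) (volume : Measure ℝ) volume :=
    measurePreserving_add_right volume t
  calc _ = ∫⁻ x in Ioi 0, ENNReal.ofReal (exp (-(r * t)) * (x / (x + t)) ^ (1 - a))
        ∂gammaMeasure a r := by
        rw [Measure.restrict_eq_self_of_ae_mem (s := Ioi 0) (ae_pos_gammaMeasure a r)]
    _ = ∫⁻ x in Ioi 0, gammaPDF a r (x + t) := by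
        rw [gammaMeasure, restrict_withDensity measurableSet_Ioi,
          lintegral_withDensity_eq_lintegral_mul _ (measurable_gammaPDF a r) (by fun_prop)]
        exact setLIntegral_congr_fun measurableSet_Ioi fun x hx =>
          gammaPDF_mul_exp_mul_rpow_div_add ht hx
    _ = ∫⁻ x in Ioi t, gammaPDF a r x := by
        rw [← hshift.setLIntegral_comp_preimage measurableSet_Ioi (measurable_gammaPDF a r),
          preimage_add_const_Ioi, sub_self]
    _ = gammaMeasure a r (Ioi t) := (withDensity_apply _ measurableSet_Ioi).symm

lemma map_div_prod_expMeasure_Ioi {ν : Measure ℝ} [SFinite ν] (hν : ∀ᵐ z ∂ν, 0 < z)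
    {r t : ℝ} (hr : 0 < r) (ht : 0 ≤ t) :
    (ν.prod (expMeasure r)).map (fun p => p.2 / p.1) (Ioi t)
      = ∫⁻ z, ENNReal.ofReal (exp (-(r * (t * z)))) ∂ν := by
  have := isProbabilityMeasure_expMeasure hr
  have hdiv : Measurable fun p : ℝ × ℝ => p.2 / p.1 := by fun_prop
  rw [Measure.map_apply hdiv measurableSet_Ioi, Measure.prod_apply (hdiv measurableSet_Ioi)]
  refine lintegral_congr_ae ?_
  filter_upwards [hν] with z hz
  have hslice : Prod.mk z ⁻¹' ((fun p : ℝ × ℝ => p.2 / p.1) ⁻¹' Ioi t) = Ioi (t * z) := by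
    ext w
    simp [lt_div_iff₀ hz]
  rw [hslice, expMeasure_Ioi hr (mul_nonneg ht hz.le)]

lemma ext_of_measure_Ioi_nonneg {μ ν : Measure ℝ} [IsProbabilityMeasure μ]
    [IsProbabilityMeasure ν] (hν : ν (Ioi 0) = 1) (h : ∀ t, 0 ≤ t → μ (Ioi t) = ν (Ioi t)) :
    μ = ν := by
  have hIoi : ∀ t, μ (Ioi t) = ν (Ioi t) := by
    intro t
    rcases le_or_gt 0 t with ht | ht
    · exact h t ht
    have h_one : ∀ (ρ : Measure ℝ) [IsProbabilityMeasure ρ], ρ (Ioi 0) = 1 → ρ (Ioi t) = 1 :=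
      fun ρ _ h0 => le_antisymm prob_le_one (h0 ▸ measure_mono (Ioi_subset_Ioi ht.le))
    rw [h_one μ (h 0 le_rfl ▸ hν), h_one ν hν]
  refine Measure.ext_of_Iic μ ν fun t => ?_
  rw [← compl_Ioi, prob_compl_eq_one_sub measurableSet_Ioi,
    prob_compl_eq_one_sub measurableSet_Ioi, hIoi]

lemma lintegral_exp_neg_mul_add_div_gammaMeasure_prod {r t : ℝ} (hr1 : r < 1) (ht : 0 ≤ t) :
    ∫⁻ p, ENNReal.ofReal (exp (-(t * ((p.1 + p.2) / p.1))))
        ∂(gammaMeasure r 1).prod (gammaMeasure (1 - r) 1)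
      = gammaMeasure r 1 (Ioi t) := by
  have := isProbabilityMeasure_gammaMeasure (sub_pos.mpr hr1) one_pos
  rw [lintegral_prod _ (by fun_prop), ← lintegral_exp_mul_rpow_div_add_gammaMeasure ht]
  refine lintegral_congr_ae ?_
  filter_upwards [ae_pos_gammaMeasure r 1] with x hx
  have hsplit : ∀ y, ENNReal.ofReal (exp (-(t * ((x + y) / x))))
      = ENNReal.ofReal (exp (-(1 * t))) * ENNReal.ofReal (exp (-(t / x * y))) := by
    intro y
    rw [← ENNReal.ofReal_mul (exp_pos _).le, ← exp_add]
    field_simp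
    ring_nf
  have hLaplace := lintegral_exp_neg_mul_gammaMeasure (sub_pos.mpr hr1) one_pos
    (by positivity : 0 < 1 + t / x)
  simp_rw [hsplit]
  rw [lintegral_const_mul _ (by fun_prop), hLaplace, ← ENNReal.ofReal_mul (exp_pos _).le]
  congr 3
  field_simp

theorem map_div_gammaMeasure_prod_expMeasure {r : ℝ} (hr0 : 0 < r) (hr1 : r < 1) :
    (((gammaMeasure r 1).prod (gammaMeasure (1 - r) 1)).prod (expMeasure 1)).map
      (fun p => p.2 / ((p.1.1 + p.1.2) / p.1.1)) = gammaMeasure r 1 := by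
  set M := (gammaMeasure r 1).prod (gammaMeasure (1 - r) 1)
  set Z : ℝ × ℝ → ℝ := fun p => (p.1 + p.2) / p.1
  have := isProbabilityMeasure_gammaMeasure hr0 one_pos
  have := isProbabilityMeasure_gammaMeasure (sub_pos.mpr hr1) one_pos
  have := isProbabilityMeasure_expMeasure one_pos
  have hZ : Measurable Z := by fun_prop
  have hZ_pos : ∀ᵐ z ∂M.map Z, 0 < z := by
    rw [ae_map_iff hZ.aemeasurable measurableSet_Ioi]
    filter_upwards [Measure.quasiMeasurePreserving_fst.ae (ae_pos_gammaMeasure r 1),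
      Measure.quasiMeasurePreserving_snd.ae (ae_pos_gammaMeasure (1 - r) 1)] with p h1 h2
    exact div_pos (add_pos h1 h2) h1
  have hmix : (M.prod (expMeasure 1)).map (fun p => p.2 / Z p.1)
      = ((M.map Z).prod (expMeasure 1)).map (fun q => q.2 / q.1) := by
    conv_rhs => rw [← Measure.map_id (μ := expMeasure 1),
      Measure.map_prod_map _ _ hZ measurable_id,
      Measure.map_map (by fun_prop) (hZ.prodMap measurable_id)]
    rfl
  have := Measure.isProbabilityMeasure_map (μ := M.prod (expMeasure 1))
    (f := fun p => p.2 / Z p.1) (by fun_prop)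
  refine ext_of_measure_Ioi_nonneg ?_ fun t ht => ?_
  · exact (ae_mem_iff_measure_eq measurableSet_Ioi.nullMeasurableSet).mp
      (ae_pos_gammaMeasure r 1) |>.trans measure_univ
  rw [hmix, map_div_prod_expMeasure_Ioi hZ_pos one_pos ht, lintegral_map (by fun_prop) hZ]
  simp only [one_mul]
  exact lintegral_exp_neg_mul_add_div_gammaMeasure_prod hr1 ht

lemma ProbabilityTheory.iIndepFun.map_prodMk_prodMk_fin_three {Ω β : Type*}
    [MeasurableSpace Ω] [MeasurableSpace β] {P : Measure Ω} [IsFiniteMeasure P] {X Y V : Ω → β}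
    (hX : Measurable X) (hY : Measurable Y) (hV : Measurable V) (h : iIndepFun ![X, Y, V] P) :
    P.map (fun ω => ((X ω, Y ω), V ω)) = ((P.map X).prod (P.map Y)).prod (P.map V) := by
  have hmeas : ∀ i, Measurable (![X, Y, V] i) := fun i => by fin_cases i <;> assumption
  have hXY : IndepFun X Y P := by simpa using h.indepFun (show (0 : Fin 3) ≠ 1 by decide)
  have hXY_V : IndepFun (fun ω => (X ω, Y ω)) V P := by
    simpa using h.indepFun_prodMk hmeas 0 1 2 (by decide) (by decide)
  rw [hXY_V.map_prod_eq_prod_map_map (hX.prodMk hY).aemeasurable hV.aemeasurable,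
    hXY.map_prod_eq_prod_map_map hX.aemeasurable hY.aemeasurable]

/-- Gleser representation: Let G₁ ~ Gamma(r,1), G₂ ~ Gamma(1−r,1) and
W ~ Exponential(1) = Gamma(1,1) be independent, 0 < r < 1, and Z = (G₁+G₂)/G₁.
Then W/Z ~ Gamma(r,1). -/
theorem gleser_representation
    {Ω : Type*} [MeasurableSpace Ω] (P : Measure Ω) [IsProbabilityMeasure P]
    (r : ℝ) (hr0 : 0 < r) (hr1 : r < 1)
    (G₁ G₂ W : Ω → ℝ)
    (hG₁m : Measurable G₁) (hG₂m : Measurable G₂) (hWm : Measurable W)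
    (hIndep : iIndepFun ![G₁, G₂, W] P)
    (hG₁ : Measure.map G₁ P = gammaLaw r 1)
    (hG₂ : Measure.map G₂ P = gammaLaw (1 - r) 1)
    (hW : Measure.map W P = gammaLaw 1 1) :
    Measure.map (fun ω => W ω / ((G₁ ω + G₂ ω) / G₁ ω)) P = gammaLaw r 1 := by
  have hlaw := hIndep.map_prodMk_prodMk_fin_three hG₁m hG₂m hWm
  rw [hG₁, hG₂, hW] at hlaw
  simp only [gammaLaw_eq_gammaMeasure] at hlaw ⊢
  rw [← map_div_gammaMeasure_prod_expMeasure hr0 hr1, expMeasure, ← hlaw,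
    Measure.map_map (by fun_prop) (by fun_prop)]
  rfl

end
end

section
/- Let W₁ ~ Exponential(1) and X ~ Standard Normal, independent. Then W₁ has the same distribution as |X|·√(2W₁'), where W₁' ~ Exponential(1) is independent of X. Equivalently, for all x ≥ 0, P(|X|√(2W) ≤ x) = 1 − e^{−x}. -/
/-!
Conditioning on `X = t`, the event `|X| √(2W) ≤ x` is `W ≤ x² / (2t²)`, so
`P(|X| √(2W) > x) = E[exp(-x² / (2X²))]`. Completing the square,
`φ(t) exp(-x² / (2t²)) = e^{-x} φ(t - x/t)` for the standard normal density `φ`, and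
Glasser's substitution `u = t - x/t` gives `∫ φ(t - x/t) dt = ∫ φ = 1`: on `t > 0` it maps
onto `ℝ` with Jacobian `1 + x/t²`, and the inversion `t ↦ x/t`, which sends `t - x/t` to its
negative, turns the `x/t²` part back into `∫_{t > 0} φ(t - x/t) dt`.
-/

open MeasureTheory ProbabilityTheory Real Set

section Glasser

variable {a : ℝ}

lemma hasDerivWithinAt_sub_div {t : ℝ} (ht : t ∈ Ioi 0) :
    HasDerivWithinAt (fun t : ℝ => t - a / t) (1 + a / t ^ 2) (Ioi 0) t := by
  simpa [div_eq_mul_inv] using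
    ((hasDerivAt_id' t).fun_sub ((hasDerivAt_inv ht.ne').const_mul a)).hasDerivWithinAt

lemma hasDerivWithinAt_div {t : ℝ} (ht : t ∈ Ioi 0) :
    HasDerivWithinAt (fun t : ℝ => a / t) (-(a / t ^ 2)) (Ioi 0) t := by
  simpa [div_eq_mul_inv] using ((hasDerivAt_inv ht.ne').const_mul a).hasDerivWithinAt

lemma strictMonoOn_sub_div (ha : 0 ≤ a) : StrictMonoOn (fun t : ℝ => t - a / t) (Ioi 0) :=
  fun _ hs _ _ hst => by
    have := div_le_div_of_nonneg_left ha hs hst.le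
    simp only
    linarith

lemma image_sub_div_Ioi (ha : 0 < a) : (fun t : ℝ => t - a / t) '' Ioi 0 = univ := by
  refine eq_univ_of_forall fun u => ?_
  set s := √(u ^ 2 + 4 * a)
  have hs : s ^ 2 = u ^ 2 + 4 * a := sq_sqrt (by positivity)
  have hus : |u| < s := by
    rw [← sqrt_sq_eq_abs]; exact sqrt_lt_sqrt (sq_nonneg u) (by linarith)
  have ht : 0 < u + s := by linarith [neg_abs_le u]
  refine ⟨(u + s) / 2, half_pos ht, ?_⟩
  field_simp
  linear_combination hs

lemma image_div_Ioi (ha : 0 < a) : (fun t : ℝ => a / t) '' Ioi 0 = Ioi 0 := by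
  refine Subset.antisymm ?_ fun u (hu : 0 < u) =>
    ⟨a / u, div_pos ha hu, div_div_cancel₀ ha.ne'⟩
  rintro _ ⟨t, ht, rfl⟩
  exact div_pos ha ht

lemma abs_one_add_div_sq {t : ℝ} (ha : 0 ≤ a) : |1 + a / t ^ 2| = 1 + a / t ^ 2 :=
  abs_of_nonneg (by positivity)

lemma integrable_iff_integrableOn_Ioi_comp_sub_div (ha : 0 < a) (g : ℝ → ℝ) :
    Integrable g ↔ IntegrableOn (fun t => (1 + a / t ^ 2) * g (t - a / t)) (Ioi 0) := by
  rw [← integrableOn_univ, ← image_sub_div_Ioi ha,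
    integrableOn_image_iff_integrableOn_abs_deriv_smul measurableSet_Ioi
      (fun _ => hasDerivWithinAt_sub_div) (strictMonoOn_sub_div ha.le).injOn]
  simp only [abs_one_add_div_sq ha.le, smul_eq_mul]

lemma integral_eq_setIntegral_Ioi_comp_sub_div (ha : 0 < a) (g : ℝ → ℝ) :
    ∫ u, g u = ∫ t in Ioi 0, (1 + a / t ^ 2) * g (t - a / t) := by
  rw [← setIntegral_univ, ← image_sub_div_Ioi ha,
    integral_image_eq_integral_abs_deriv_smul measurableSet_Ioi
      (fun _ => hasDerivWithinAt_sub_div) (strictMonoOn_sub_div ha.le).injOn]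
  simp only [abs_one_add_div_sq ha.le, smul_eq_mul]

lemma setIntegral_Ioi_comp_div (ha : 0 < a) (g : ℝ → ℝ) :
    ∫ t in Ioi 0, a / t ^ 2 * g (a / t) = ∫ t in Ioi 0, g t := by
  conv_rhs => rw [← image_div_Ioi ha]
  rw [integral_image_eq_integral_abs_deriv_smul measurableSet_Ioi (fun _ => hasDerivWithinAt_div)
    (StrictAntiOn.injOn fun _ hs _ _ hst => div_lt_div_of_pos_left ha hs hst)]
  refine setIntegral_congr_fun measurableSet_Ioi fun t (ht : 0 < t) => ?_
  rw [smul_eq_mul, abs_neg, abs_of_pos (by positivity)]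

lemma setIntegral_Ioi_comp_sub_div_of_even {f : ℝ → ℝ} (hf : Integrable f)
    (heven : ∀ u, f (-u) = f u) (ha : 0 < a) :
    ∫ t in Ioi 0, f (t - a / t) = (∫ u, f u) / 2 := by
  have hint_weighted := (integrable_iff_integrableOn_Ioi_comp_sub_div ha f).mp hf
  have hint : IntegrableOn (fun t => f (t - a / t)) (Ioi 0) := by
    refine IntegrableOn.congr_fun (hint_weighted.bdd_mul (c := 1)
      (f := fun t => (1 + a / t ^ 2)⁻¹) (Measurable.aestronglyMeasurable (by fun_prop)) ?_)
      (fun t _ => inv_mul_cancel_left₀ (by positivity) _) measurableSet_Ioi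
    refine ae_of_all _ fun t => ?_
    rw [norm_inv, Real.norm_of_nonneg (by positivity)]
    exact inv_le_one_of_one_le₀ (le_add_of_nonneg_right (by positivity))
  -- `t ↦ a / t` maps `t - a / t` to its negative
  have hinv : ∫ t in Ioi 0, a / t ^ 2 * f (t - a / t) = ∫ t in Ioi 0, f (t - a / t) := by
    rw [← setIntegral_Ioi_comp_div ha fun t => f (t - a / t)]
    refine setIntegral_congr_fun measurableSet_Ioi fun t (ht : 0 < t) => ?_
    rw [← heven (a / t - _)]
    congr 3
    field_simp
    ring
  have hint_inv : IntegrableOn (fun t => a / t ^ 2 * f (t - a / t)) (Ioi 0) :=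
    (hint_weighted.sub hint).congr_fun (fun t _ => by simp only [Pi.sub_apply]; ring)
      measurableSet_Ioi
  rw [integral_eq_setIntegral_Ioi_comp_sub_div ha f,
    setIntegral_congr_fun measurableSet_Ioi fun t _ => one_add_mul (a / t ^ 2) (f (t - a / t)),
    integral_add hint hint_inv, hinv]
  ring

lemma integral_comp_sub_div_of_even {f : ℝ → ℝ} (hf : Integrable f)
    (heven : ∀ u, f (-u) = f u) (ha : 0 < a) : ∫ t, f (t - a / t) = ∫ u, f u := by
  have habs : ∀ t : ℝ, f (|t| - a / |t|) = f (t - a / t) := fun t => by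
    rcases abs_choice t with h | h
    · rw [h]
    · rw [h, ← heven]; ring_nf
  rw [funext fun t => (habs t).symm, integral_comp_abs (f := fun s => f (s - a / s)),
    setIntegral_Ioi_comp_sub_div_of_even hf heven ha]
  ring

end Glasser

lemma integral_exp_neg_sq_div_sq_gaussianReal (a : ℝ) :
    ∫ t, exp (-(a ^ 2 / (2 * t ^ 2))) ∂gaussianReal 0 1 = exp (-|a|) := by
  rcases eq_or_ne a 0 with rfl | ha
  · simp
  rw [← sq_abs a, integral_gaussianReal_eq_integral_smul one_ne_zero]
  calc ∫ t, gaussianPDFReal 0 1 t • exp (-(|a| ^ 2 / (2 * t ^ 2)))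
      = ∫ t, exp (-|a|) * gaussianPDFReal 0 1 (t - |a| / t) := by
        refine integral_congr_ae ?_
        filter_upwards [Measure.ae_ne volume 0] with t ht
        simp only [gaussianPDFReal, smul_eq_mul, NNReal.coe_one, mul_one, sub_zero]
        have hexp : exp (-t ^ 2 / 2) * exp (-(|a| ^ 2 / (2 * t ^ 2)))
            = exp (-|a|) * exp (-(t - |a| / t) ^ 2 / 2) := by
          rw [← exp_add, ← exp_add]
          congr 1
          field_simp
          ring
        linear_combination (√(2 * π))⁻¹ * hexp
    _ = exp (-|a|) := by
        rw [integral_const_mul,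
          integral_comp_sub_div_of_even (integrable_gaussianPDFReal 0 1)
            (fun u => by simp [gaussianPDFReal]) (abs_pos.mpr ha),
          integral_gaussianPDFReal_eq_one 0 one_ne_zero, mul_one]

lemma eq_expMeasure_of_measureReal_Iic {μ : Measure ℝ} [IsProbabilityMeasure μ] {r : ℝ}
    (hr : 0 < r) (h : ∀ x, 0 ≤ x → μ.real (Iic x) = 1 - exp (-(r * x))) :
    μ = expMeasure r := by
  have := isProbabilityMeasure_expMeasure hr
  refine Measure.eq_of_cdf μ _ ?_
  ext x
  rw [cdf_expMeasure_eq hr, cdf_eq_real]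
  split_ifs with hx
  · exact h x hx
  · have hmono : cdf μ x ≤ cdf μ 0 := (cdf μ).mono (not_le.mp hx).le
    rw [cdf_eq_real, cdf_eq_real, h 0 le_rfl] at hmono
    simp only [mul_zero, neg_zero, exp_zero, sub_self] at hmono
    exact le_antisymm hmono measureReal_nonneg

lemma setOf_abs_mul_sqrt_two_mul_le {t x : ℝ} (ht : t ≠ 0) (hx : 0 ≤ x) :
    {w : ℝ | |t| * √(2 * w) ≤ x} = Iic (x ^ 2 / (2 * t ^ 2)) := by
  ext w
  have ht' : 0 < |t| := abs_pos.mpr ht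
  rw [mem_ofPred_eq, mem_Iic, mul_comm, ← le_div_iff₀ ht', sqrt_le_left (div_nonneg hx ht'.le),
    div_pow, sq_abs, mul_comm 2 (t ^ 2), ← div_div]
  exact ⟨fun h => by linarith, fun h => by linarith⟩

lemma measureReal_prod_expMeasure_abs_mul_sqrt_le {μ : Measure ℝ} [IsProbabilityMeasure μ]
    (hμ : μ {0} = 0) {x : ℝ} (hx : 0 ≤ x) :
    (μ.prod (expMeasure 1)).real {p | |p.1| * √(2 * p.2) ≤ x}
      = 1 - ∫ t, exp (-(x ^ 2 / (2 * t ^ 2))) ∂μ := by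
  have := isProbabilityMeasure_expMeasure one_pos
  have hsection : ∀ᵐ t ∂μ,
      expMeasure 1 (Prod.mk t ⁻¹' {p : ℝ × ℝ | |p.1| * √(2 * p.2) ≤ x})
        = ENNReal.ofReal (1 - exp (-(x ^ 2 / (2 * t ^ 2)))) := by
    filter_upwards [measure_eq_zero_iff_ae_notMem.mp hμ] with t ht
    rw [preimage_ofPred_eq, setOf_abs_mul_sqrt_two_mul_le ht hx, ← ofReal_cdf,
      cdf_expMeasure_eq one_pos, if_pos (by positivity), one_mul]
  have hnonneg : ∀ t, 0 ≤ 1 - exp (-(x ^ 2 / (2 * t ^ 2))) := fun t => by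
    rw [sub_nonneg, exp_le_one_iff, neg_nonpos]; positivity
  have hint : Integrable (fun t => exp (-(x ^ 2 / (2 * t ^ 2)))) μ :=
    Integrable.of_bound (Measurable.aestronglyMeasurable (by fun_prop)) 1 (ae_of_all _ fun t => by
      rw [norm_of_nonneg (exp_nonneg _), exp_le_one_iff, neg_nonpos]; positivity)
  rw [measureReal_def, Measure.prod_apply (measurableSet_le (by fun_prop) measurable_const),
    lintegral_congr_ae hsection, ← integral_eq_lintegral_of_nonneg_ae (ae_of_all _ hnonneg)
      (Measurable.aestronglyMeasurable (by fun_prop)),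
    integral_sub (integrable_const 1) hint, integral_const, probReal_univ, one_smul]

/-- Let X be standard normal and W standard exponential, independent.
Then |X|·√(2W) is standard exponential: for all x ≥ 0, P(|X|√(2W) ≤ x) = 1 − e^{−x}. -/
theorem abs_normal_sqrt_two_exponential
    {Ω : Type*} [MeasurableSpace Ω] (P : Measure Ω) [IsProbabilityMeasure P]
    (X W : Ω → ℝ) (hXm : Measurable X) (hWm : Measurable W)
    (hX : Measure.map X P = gaussianReal 0 1)
    (hW : ∀ x : ℝ, 0 ≤ x → (P {ω | W ω ≤ x}).toReal = 1 - Real.exp (-x))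
    (hInd : IndepFun X W P) :
    ∀ x : ℝ, 0 ≤ x →
      (P {ω | |X ω| * Real.sqrt (2 * W ω) ≤ x}).toReal = 1 - Real.exp (-x) := by
  intro x hx
  have := Measure.isProbabilityMeasure_map (μ := P) hWm.aemeasurable
  have hWlaw : P.map W = expMeasure 1 := eq_expMeasure_of_measureReal_Iic one_pos fun y hy => by
    rw [map_measureReal_apply hWm measurableSet_Iic, one_mul]
    exact hW y hy
  have hjoint : P.map (fun ω => (X ω, W ω)) = (gaussianReal 0 1).prod (expMeasure 1) := by
    rw [← hX, ← hWlaw]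
    exact (indepFun_iff_map_prod_eq_prod_map_map hXm.aemeasurable hWm.aemeasurable).mp hInd
  calc (P {ω | |X ω| * √(2 * W ω) ≤ x}).toReal
      = ((gaussianReal 0 1).prod (expMeasure 1)).real {p | |p.1| * √(2 * p.2) ≤ x} := by
        rw [← hjoint, map_measureReal_apply (hXm.prodMk hWm)
          (measurableSet_le (by fun_prop) measurable_const)]
        rfl
    _ = 1 - exp (-x) := by
        rw [measureReal_prod_expMeasure_abs_mul_sqrt_le
          (gaussianReal_absolutelyContinuous 0 one_ne_zero (measure_singleton 0)) hx,
          integral_exp_neg_sq_div_sq_gaussianReal, abs_of_nonneg hx]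
end
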